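/- Let X and Y be real 2n×2n matrices such that ΩX and ΩY are symmetric, let s, t ∈ ℝ^{2n} and a, b ∈ ℝ. Then the commutator of the block matrices A = [[0, sᵀΩᵀ, a], [0, X, s], [0, 0, 0]] and B = [[0, tᵀΩᵀ, b], [0, Y, t], [0, 0, 0]] (blocks of sizes 1, 2n, 1) is [A, B] = AB − BA = [[0, (Xt − Ys)ᵀΩᵀ, −2 sᵀΩt], [0, XY − YX, Xt − Ys], [0, 0, 0]]. In particular, the set of such block matrices is closed under commutators. -/
import Mathlib

noncomputable section
open Matrix

def Om (n : ℕ) : Matrix (Fin n ⊕ Fin n) (Fin n ⊕ Fin n) ℝ :=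
  Matrix.fromBlocks 0 1 (-1) 0

def blk {n : ℕ} (X : Matrix (Fin n ⊕ Fin n) (Fin n ⊕ Fin n) ℝ)
    (s : Fin n ⊕ Fin n → ℝ) (a : ℝ) :
    Matrix (Unit ⊕ ((Fin n ⊕ Fin n) ⊕ Unit)) (Unit ⊕ ((Fin n ⊕ Fin n) ⊕ Unit)) ℝ :=
  Matrix.of fun i j =>
    match i, j with
    | Sum.inl _, Sum.inr (Sum.inl k) => (Om n *ᵥ s) k  -- row vector sᵀΩᵀ
    | Sum.inl _, Sum.inr (Sum.inr _) => a
    | Sum.inr (Sum.inl k), Sum.inr (Sum.inl l) => X k l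
    | Sum.inr (Sum.inl k), Sum.inr (Sum.inr _) => s k
    | _, _ => 0

lemma Om_transpose (n : ℕ) : (Om n)ᵀ = -(Om n) := by
  simp [Om, Matrix.fromBlocks_transpose, Matrix.fromBlocks_neg]

lemma key {n : ℕ} {X : Matrix (Fin n ⊕ Fin n) (Fin n ⊕ Fin n) ℝ}
    (hX : (Om n * X).IsSymm) : Xᵀ * Om n = -(Om n * X) := by
  have h := hX.eq
  rw [Matrix.transpose_mul, Om_transpose] at h
  rw [← h]; simp

lemma key' {n : ℕ} {X : Matrix (Fin n ⊕ Fin n) (Fin n ⊕ Fin n) ℝ}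
    (hX : (Om n * X).IsSymm) (v : Fin n ⊕ Fin n → ℝ) (l : Fin n ⊕ Fin n) :
    ∑ k, (Om n *ᵥ v) k * X k l = -(Om n *ᵥ (X *ᵥ v)) l := by
  have : ((Om n *ᵥ v) ᵥ* X) l = ((Xᵀ * Om n) *ᵥ v) l := by
    rw [← Matrix.mulVec_transpose, ← Matrix.mulVec_mulVec]
  simpa [Matrix.vecMul, dotProduct, key hX, Matrix.neg_mulVec,
    Matrix.mulVec_mulVec] using this

lemma key's {n : ℕ} {X : Matrix (Fin n ⊕ Fin n) (Fin n ⊕ Fin n) ℝ}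
    (hX : (Om n * X).IsSymm) (v : Fin n ⊕ Fin n → ℝ) (l : Fin n ⊕ Fin n) :
    (∑ a₁ : Fin n, (Om n *ᵥ v) (Sum.inl a₁) * X (Sum.inl a₁) l)
      + ∑ a₂ : Fin n, (Om n *ᵥ v) (Sum.inr a₂) * X (Sum.inr a₂) l
      = -(Om n *ᵥ (X *ᵥ v)) l := by
  have h := Fintype.sum_sum_type (fun k => (Om n *ᵥ v) k * X k l)
  rw [← h]; exact key' hX v l

lemma key2 {n : ℕ} (s t : Fin n ⊕ Fin n → ℝ) :
    ∑ k, (Om n *ᵥ s) k * t k = -(s ⬝ᵥ (Om n *ᵥ t)) := by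
  have : (Om n *ᵥ s) ⬝ᵥ t = t ⬝ᵥ (Om n *ᵥ s) := dotProduct_comm _ _
  rw [Matrix.dotProduct_mulVec] at this
  have h2 : t ᵥ* Om n = -(Om n *ᵥ t) := by
    rw [← Matrix.mulVec_transpose, Om_transpose]; simp [Matrix.neg_mulVec]
  simpa [dotProduct, h2, mul_comm] using this

lemma key2s {n : ℕ} (s t : Fin n ⊕ Fin n → ℝ) :
    (∑ a₁ : Fin n, (Om n *ᵥ s) (Sum.inl a₁) * t (Sum.inl a₁))
      + ∑ a₂ : Fin n, (Om n *ᵥ s) (Sum.inr a₂) * t (Sum.inr a₂)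
      = -(s ⬝ᵥ (Om n *ᵥ t)) := by
  have h := Fintype.sum_sum_type (fun k => (Om n *ᵥ s) k * t k)
  rw [← h]; exact key2 s t

lemma key3s {n : ℕ} (X : Matrix (Fin n ⊕ Fin n) (Fin n ⊕ Fin n) ℝ)
    (t : Fin n ⊕ Fin n → ℝ) (k : Fin n ⊕ Fin n) :
    (∑ a₁ : Fin n, X k (Sum.inl a₁) * t (Sum.inl a₁))
      + ∑ a₂ : Fin n, X k (Sum.inr a₂) * t (Sum.inr a₂) = (X *ᵥ t) k := by
  have h := Fintype.sum_sum_type (fun l => X k l * t l)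
  rw [← h]; simp [Matrix.mulVec, dotProduct]

/-- The commutator of the block matrices `[[0, sᵀΩᵀ, a], [0, X, s], [0, 0, 0]]` and
`[[0, tᵀΩᵀ, b], [0, Y, t], [0, 0, 0]]` is `[[0, (Xt - Ys)ᵀΩᵀ, -2sᵀΩt], [0, XY - YX, Xt - Ys],
[0, 0, 0]]`; in particular such block matrices are closed under commutators. -/
theorem blk_commutator (n : ℕ)
    (X Y : Matrix (Fin n ⊕ Fin n) (Fin n ⊕ Fin n) ℝ)
    (s t : Fin n ⊕ Fin n → ℝ) (a b : ℝ)
    (hX : (Om n * X).IsSymm) (hY : (Om n * Y).IsSymm) :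
    blk X s a * blk Y t b - blk Y t b * blk X s a
      = blk (X * Y - Y * X) (X *ᵥ t - Y *ᵥ s) (-2 * (s ⬝ᵥ (Om n *ᵥ t))) := by
  ext i j
  cases i with
  | inl u => cases j with
    | inl v => simp [blk, Matrix.mul_apply, Fintype.sum_sum_type]
    | inr j => cases j with
      | inl l =>
        simp only [blk, Matrix.mul_apply, Fintype.sum_sum_type, Matrix.sub_apply,
          Matrix.of_apply, zero_mul, mul_zero, add_zero, zero_add, Finset.sum_const_zero,
          Finset.univ_unique, Finset.sum_singleton]
        rw [key's hY s l, key's hX t l]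
        simp [Matrix.mulVec_sub]
        ring
      | inr v =>
        simp only [blk, Matrix.mul_apply, Fintype.sum_sum_type, Matrix.sub_apply,
          Matrix.of_apply, zero_mul, mul_zero, add_zero, zero_add, Finset.sum_const_zero,
          Finset.univ_unique, Finset.sum_singleton]
        rw [key2s s t, key2s t s]
        have : t ⬝ᵥ (Om n *ᵥ s) = -(s ⬝ᵥ (Om n *ᵥ t)) := by
          rw [Matrix.dotProduct_mulVec, ← Matrix.mulVec_transpose, Om_transpose]
          simp [Matrix.neg_mulVec, dotProduct_comm]
        rw [this]; ring
  | inr i => cases i with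
    | inl k => cases j with
      | inl v => simp [blk, Matrix.mul_apply, Fintype.sum_sum_type]
      | inr j => cases j with
        | inl l => simp [blk, Matrix.mul_apply, Fintype.sum_sum_type]
        | inr v =>
          simp only [blk, Matrix.mul_apply, Fintype.sum_sum_type, Matrix.sub_apply,
            Matrix.of_apply, zero_mul, mul_zero, add_zero, zero_add, Finset.sum_const_zero,
            Finset.univ_unique, Finset.sum_singleton]
          rw [key3s X t k, key3s Y s k]
          simp
    | inr u => cases j with
      | inl v => simp [blk, Matrix.mul_apply, Fintype.sum_sum_type]
      | inr j => cases j with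
        | inl l => simp [blk, Matrix.mul_apply, Fintype.sum_sum_type]
        | inr v => simp [blk, Matrix.mul_apply, Fintype.sum_sum_type]
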